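/- arXiv:1110.4925 — 2 statements merged into one kernel-verified Lean document; each statement's English description precedes it below -/
import Mathlib

section
/- Let T = [t1 t2; t3 t4] with nonnegative entries summing to 1 and satisfying t1·t4 = t2·t3 (equivalently t1/t2 = t3/t4 when t2,t4 > 0). Then the ℓ-fold Kronecker power P_SKG of T equals the rank-one matrix P_CL defined by P_CL(i,j) = (t1+t2)^{z_i}(t3+t4)^{ℓ-z_i}(t1+t3)^{z_j}(t2+t4)^{ℓ-z_j}, where z_i and z_j are the number of zero bits in the ℓ-bit representations of i and j. That is, P_SKG(i,j) = P_CL(i,j) for all i, j ∈ {0,...,2^ℓ-1}. -/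
open Finset

noncomputable section

/-- The ℓ-fold Kronecker power of a 2×2 real matrix, indexed by `Fin (2^ℓ)`,
identifying an index with its ℓ-bit binary representation. -/
def kronPow : (ℓ : ℕ) → Matrix (Fin 2) (Fin 2) ℝ → Matrix (Fin (2 ^ ℓ)) (Fin (2 ^ ℓ)) ℝ
  | 0, _ => 1
  | ℓ + 1, T => fun i j =>
      T ⟨i.val / 2 ^ ℓ, Nat.div_lt_of_lt_mul (pow_succ 2 ℓ ▸ i.isLt)⟩
        ⟨j.val / 2 ^ ℓ, Nat.div_lt_of_lt_mul (pow_succ 2 ℓ ▸ j.isLt)⟩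
      * kronPow ℓ T
          ⟨i.val % 2 ^ ℓ, Nat.mod_lt _ (by positivity)⟩
          ⟨j.val % 2 ^ ℓ, Nat.mod_lt _ (by positivity)⟩

/-- Number of zero bits among the ℓ low-order bits of `i`. -/
def zeroBits (ℓ i : ℕ) : ℕ :=
  ((Finset.range ℓ).filter (fun k => i / 2 ^ k % 2 = 0)).card

/-- Number of bit positions (among the ℓ low-order ones) where both `i` and `j` have bit zero. -/
def commonZeros (ℓ i j : ℕ) : ℕ :=
  ((Finset.range ℓ).filter (fun k => i / 2 ^ k % 2 = 0 ∧ j / 2 ^ k % 2 = 0)).card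

/-! A 2×2 matrix of total sum 1 and determinant 0 is the outer product of its row sums and
column sums, and the Kronecker power of an outer product `u vᵀ` is the outer product of the
Kronecker powers of `u` and `v`. The `(i, j)` entry of the latter is a product over the bits
of `i` and `j`, which only depends on how many of these bits are zero. -/

theorem Nat.mod_two_pow_div_two_pow_mod_two {ℓ k : ℕ} (i : ℕ) (hk : k < ℓ) :
    i % 2 ^ ℓ / 2 ^ k % 2 = i / 2 ^ k % 2 := by
  have hsplit : 2 ^ ℓ = 2 ^ k * 2 ^ (ℓ - k) := by
    rw [← pow_add, Nat.add_sub_cancel' hk.le]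
  rw [hsplit, Nat.mod_mul_right_div_self]
  exact Nat.mod_mod_of_dvd _ (dvd_pow_self 2 (Nat.sub_ne_zero_of_lt hk))

theorem zeroBits_mod_two_pow (ℓ i : ℕ) : zeroBits ℓ (i % 2 ^ ℓ) = zeroBits ℓ i := by
  unfold zeroBits
  congr 1
  refine Finset.filter_congr fun k hk => ?_
  rw [Nat.mod_two_pow_div_two_pow_mod_two i (Finset.mem_range.mp hk)]

theorem zeroBits_le (ℓ i : ℕ) : zeroBits ℓ i ≤ ℓ :=
  (Finset.card_filter_le _ _).trans (Finset.card_range ℓ).le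

theorem zeroBits_succ (ℓ i : ℕ) :
    zeroBits (ℓ + 1) i = zeroBits ℓ i + if i / 2 ^ ℓ % 2 = 0 then 1 else 0 := by
  unfold zeroBits
  rw [Finset.range_add_one, Finset.filter_insert]
  split
  · rw [Finset.card_insert_of_notMem (by simp)]
  · rfl

theorem Matrix.apply_eq_rowSum_mul_colSum_of_fin_two {R : Type*} [CommRing R]
    (T : Matrix (Fin 2) (Fin 2) R) (hsum : T 0 0 + T 0 1 + T 1 0 + T 1 1 = 1)
    (hdet : T 0 0 * T 1 1 = T 0 1 * T 1 0) (a b : Fin 2) :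
    T a b = (T a 0 + T a 1) * (T 0 b + T 1 b) := by
  fin_cases a <;> fin_cases b <;> simp only [Fin.zero_eta, Fin.mk_one]
  · linear_combination -T 0 0 * hsum + hdet
  · linear_combination -T 0 1 * hsum - hdet
  · linear_combination -T 1 0 * hsum - hdet
  · linear_combination -T 1 1 * hsum + hdet

/-- The entry at `i` of the ℓ-fold Kronecker power of the vector `u`. -/
def bitWeight {M : Type*} [CommMonoid M] (u : Fin 2 → M) (ℓ i : ℕ) : M :=
  u 0 ^ zeroBits ℓ i * u 1 ^ (ℓ - zeroBits ℓ i)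

section bitWeight

variable {M : Type*} [CommMonoid M] (u : Fin 2 → M)

theorem bitWeight_mod_two_pow (ℓ i : ℕ) : bitWeight u ℓ (i % 2 ^ ℓ) = bitWeight u ℓ i := by
  rw [bitWeight, bitWeight, zeroBits_mod_two_pow]

theorem bitWeight_succ {ℓ i : ℕ} (hi : i / 2 ^ ℓ < 2) :
    bitWeight u (ℓ + 1) i = u ⟨i / 2 ^ ℓ, hi⟩ * bitWeight u ℓ i := by
  have hle := zeroBits_le ℓ i
  unfold bitWeight
  rw [zeroBits_succ, Nat.mod_eq_of_lt hi]
  generalize i / 2 ^ ℓ = b at hi ⊢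
  interval_cases b
  · rw [if_pos rfl, Nat.add_sub_add_right, pow_succ]
    ac_rfl
  · rw [if_neg one_ne_zero, Nat.add_zero, Nat.sub_add_comm hle, pow_succ]
    ac_rfl

end bitWeight

theorem kronPow_apply_of_apply_eq_mul {T : Matrix (Fin 2) (Fin 2) ℝ} {u v : Fin 2 → ℝ}
    (h : ∀ a b, T a b = u a * v b) (ℓ : ℕ) (i j : Fin (2 ^ ℓ)) :
    kronPow ℓ T i j = bitWeight u ℓ i * bitWeight v ℓ j := by
  induction ℓ with
  | zero =>
    obtain rfl : i = j := Fin.ext (by omega)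
    simp [kronPow, bitWeight, zeroBits]
  | succ ℓ ih =>
    simp only [kronPow]
    rw [h, ih, bitWeight_mod_two_pow, bitWeight_mod_two_pow,
      bitWeight_succ u (Nat.div_lt_of_lt_mul (pow_succ 2 ℓ ▸ i.isLt)),
      bitWeight_succ v (Nat.div_lt_of_lt_mul (pow_succ 2 ℓ ▸ j.isLt))]
    ring

theorem skg_eq_cl_general (ℓ : ℕ) (T : Matrix (Fin 2) (Fin 2) ℝ)
    (hsum : T 0 0 + T 0 1 + T 1 0 + T 1 1 = 1)
    (hdet : T 0 0 * T 1 1 = T 0 1 * T 1 0) (i j : Fin (2 ^ ℓ)) :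
    kronPow ℓ T i j =
      (T 0 0 + T 0 1) ^ zeroBits ℓ i.val * (T 1 0 + T 1 1) ^ (ℓ - zeroBits ℓ i.val) *
      (T 0 0 + T 1 0) ^ zeroBits ℓ j.val * (T 0 1 + T 1 1) ^ (ℓ - zeroBits ℓ j.val) := by
  rw [kronPow_apply_of_apply_eq_mul (Matrix.apply_eq_rowSum_mul_colSum_of_fin_two T hsum hdet),
    bitWeight, bitWeight, ← mul_assoc]

theorem skg_eq_cl (ℓ : ℕ) (T : Matrix (Fin 2) (Fin 2) ℝ)
    (hnn : ∀ a b, 0 ≤ T a b)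
    (hsum : T 0 0 + T 0 1 + T 1 0 + T 1 1 = 1)
    (hdet : T 0 0 * T 1 1 = T 0 1 * T 1 0) (i j : Fin (2 ^ ℓ)) :
    kronPow ℓ T i j =
      (T 0 0 + T 0 1) ^ zeroBits ℓ i.val * (T 1 0 + T 1 1) ^ (ℓ - zeroBits ℓ i.val) *
      (T 0 0 + T 1 0) ^ zeroBits ℓ j.val * (T 0 1 + T 1 1) ^ (ℓ - zeroBits ℓ j.val) :=
  skg_eq_cl_general ℓ T hsum hdet i j
end
end

section
/- Let T = [t1 t2; t3 t4] with positive entries summing to 1, and suppose t1·t4 ≠ t2·t3. Then for every ℓ ≥ 1 there exist indices i, j ∈ {0,...,2^ℓ-1} such that P_SKG(i,j) ≠ P_CL(i,j), where P_SKG is the ℓ-fold Kronecker power of T and P_CL(i,j) = (Σ_k P_SKG(i,k))·(Σ_k P_SKG(k,j)). -/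
open Finset

noncomputable section

/-! A matrix `P` equal to the outer product of two vectors has vanishing 2×2 minors. For the
Kronecker power, the minor on the indices `0…0` and `1…1` is `(t₁t₄)^ℓ - (t₂t₃)^ℓ`, which is nonzero
when `t₁t₄ ≠ t₂t₃` and all entries are positive. -/

theorem mul_mul_eq_of_eq_outer {ι κ R : Type*} [CommMonoid R] {M : ι → κ → R}
    {r : ι → R} {c : κ → R} (h : ∀ i j, M i j = r i * c j) (i i' : ι) (j j' : κ) :
    M i j * M i' j' = M i j' * M i' j := by
  simp only [h]
  ac_rfl

/-- The index whose ℓ binary digits all equal `a`. -/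
def constBits (ℓ : ℕ) (a : Fin 2) : Fin (2 ^ ℓ) :=
  ⟨(2 ^ ℓ - 1) * a.val, by fin_cases a <;> simp⟩

theorem constBits_succ_val (ℓ : ℕ) (a : Fin 2) :
    (constBits (ℓ + 1) a).val = (constBits ℓ a).val + a.val * 2 ^ ℓ := by
  fin_cases a
  · simp [constBits]
  · have := Nat.one_le_two_pow (n := ℓ)
    simp only [constBits, mul_one, pow_succ]
    omega

theorem constBits_succ_div (ℓ : ℕ) (a : Fin 2) :
    (constBits (ℓ + 1) a).val / 2 ^ ℓ = a.val := by
  rw [constBits_succ_val, Nat.add_mul_div_right _ _ (by positivity),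
    Nat.div_eq_of_lt (constBits ℓ a).isLt, zero_add]

theorem constBits_succ_mod (ℓ : ℕ) (a : Fin 2) :
    (constBits (ℓ + 1) a).val % 2 ^ ℓ = (constBits ℓ a).val := by
  rw [constBits_succ_val, Nat.add_mul_mod_self_right, Nat.mod_eq_of_lt (constBits ℓ a).isLt]

theorem kronPow_constBits (ℓ : ℕ) (T : Matrix (Fin 2) (Fin 2) ℝ) (a b : Fin 2) :
    kronPow ℓ T (constBits ℓ a) (constBits ℓ b) = T a b ^ ℓ := by
  induction ℓ with
  | zero =>
    rw [pow_zero, Fin.fin_one_eq_zero (constBits 0 a), Fin.fin_one_eq_zero (constBits 0 b)]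
    exact Matrix.one_apply_eq _
  | succ ℓ ih =>
    simp only [kronPow, constBits_succ_div, constBits_succ_mod, Fin.eta, ih, pow_succ']

theorem skg_ne_cl_general (ℓ : ℕ) (hl : 1 ≤ ℓ) (T : Matrix (Fin 2) (Fin 2) ℝ)
    (hpos : ∀ a b, 0 < T a b)
    (hdet : T 0 0 * T 1 1 ≠ T 0 1 * T 1 0) :
    ∃ i j : Fin (2 ^ ℓ), kronPow ℓ T i j ≠
      (∑ k, kronPow ℓ T i k) * (∑ k, kronPow ℓ T k j) := by
  by_contra! houter
  have hminor := mul_mul_eq_of_eq_outer houter (constBits ℓ 0) (constBits ℓ 1)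
    (constBits ℓ 0) (constBits ℓ 1)
  simp only [kronPow_constBits, ← mul_pow] at hminor
  exact hdet <| (pow_left_inj₀ (mul_pos (hpos 0 0) (hpos 1 1)).le
    (mul_pos (hpos 0 1) (hpos 1 0)).le (by omega)).mp hminor

theorem skg_ne_cl (ℓ : ℕ) (hl : 1 ≤ ℓ) (T : Matrix (Fin 2) (Fin 2) ℝ)
    (hpos : ∀ a b, 0 < T a b)
    (hsum : T 0 0 + T 0 1 + T 1 0 + T 1 1 = 1)
    (hdet : T 0 0 * T 1 1 ≠ T 0 1 * T 1 0) :
    ∃ i j : Fin (2 ^ ℓ), kronPow ℓ T i j ≠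
      (∑ k, kronPow ℓ T i k) * (∑ k, kronPow ℓ T k j) :=
  skg_ne_cl_general ℓ hl T hpos hdet
end
end
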